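/- (Correctness of joining two valuation functions.) Let i ≠ j be two agents with valuation functions V_i, V_j and let m be a cap vector. Then max_{a ≤ m} (V_i ⊕ V_j)(a) = OPT({i, j}, m); that is, maximizing the joint valuation function over all allocation vectors bounded by m yields the optimal social welfare of the two agents under cap m. -/

import Mathlib

/-!
Both sides equal the maximum of `V_i b + V_j c` over the finitely many pairs with `b + c ≤ m`.
For `OPT` this is just the two-term sum; for the joint valuation, every `b ≤ a ≤ m` gives the
pair `(b, a - b)`, and conversely a maximizing pair `(b, c)` is realized by `a = b + c`.
-/

/-- An allocation `A` for the agents in `G` is *valid* with cap `m` if the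
element-wise sum of the allocated vectors does not exceed `m`. -/
def Valid (R : ℕ) {ι : Type*} (G : Finset ι) (m : Fin R → ℕ)
    (A : ι → Fin R → ℕ) : Prop :=
  ∑ i ∈ G, A i ≤ m

/-- The social welfare of the allocation `A` on the agent set `G`. -/
def SW (R : ℕ) {ι : Type*} (V : ι → (Fin R → ℕ) → ℝ) (G : Finset ι)
    (A : ι → Fin R → ℕ) : ℝ :=
  ∑ i ∈ G, V i (A i)

/-- `OPT R V G m` : the maximal social welfare over all valid allocations
for the agents in `G` with cap `m`. -/
noncomputable def OPT (R : ℕ) {ι : Type*} (V : ι → (Fin R → ℕ) → ℝ)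
    (G : Finset ι) (m : Fin R → ℕ) : ℝ :=
  sSup {w : ℝ | ∃ A : ι → Fin R → ℕ, Valid R G m A ∧ SW R V G A = w}

/-- The joint valuation of `V` and `W`:
`(V ⊕ W)(a) = max_{b ≤ a} (V b + W (a - b))` (truncated subtraction). -/
noncomputable def join (R : ℕ) (V W : (Fin R → ℕ) → ℝ) : (Fin R → ℕ) → ℝ :=
  fun a => sSup {w : ℝ | ∃ b ≤ a, V b + W (a - b) = w}

section

variable {R : ℕ}

theorem exists_add_le_isMax (f : (Fin R → ℕ) → (Fin R → ℕ) → ℝ) (m : Fin R → ℕ) :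
    ∃ b c, b + c ≤ m ∧ ∀ b' c', b' + c' ≤ m → f b' c' ≤ f b c := by
  have hfin : {p : (Fin R → ℕ) × (Fin R → ℕ) | p.1 + p.2 ≤ m}.Finite :=
    ((Set.finite_Iic m).prod (Set.finite_Iic m)).subset fun p (hp : p.1 + p.2 ≤ m) =>
      ⟨le_self_add.trans hp, le_add_self.trans hp⟩
  obtain ⟨⟨b, c⟩, hbc, hmax⟩ :=
    Set.exists_max_image _ (fun p => f p.1 p.2) hfin ⟨(0, 0), by simp⟩
  exact ⟨b, c, hbc, fun b' c' h => hmax (b', c') h⟩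

theorem join_le {V W : (Fin R → ℕ) → ℝ} {a : Fin R → ℕ} {x : ℝ}
    (h : ∀ b ≤ a, V b + W (a - b) ≤ x) : join R V W a ≤ x :=
  csSup_le ⟨_, 0, zero_le, rfl⟩ fun _ ⟨b, hb, hw⟩ => hw ▸ h b hb

theorem le_join (V W : (Fin R → ℕ) → ℝ) {a b : Fin R → ℕ} (hb : b ≤ a) :
    V b + W (a - b) ≤ join R V W a := by
  have hfin : {w : ℝ | ∃ b ≤ a, V b + W (a - b) = w}.Finite :=
    (Set.finite_Iic a).image fun b => V b + W (a - b)
  exact le_csSup hfin.bddAbove ⟨b, hb, rfl⟩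

theorem sSup_join_eq_of_isMax {V W : (Fin R → ℕ) → ℝ} {m b c : Fin R → ℕ} (hbc : b + c ≤ m)
    (hmax : ∀ b' c', b' + c' ≤ m → V b' + W c' ≤ V b + W c) :
    sSup {w : ℝ | ∃ a ≤ m, join R V W a = w} = V b + W c := by
  have join_le_max : ∀ a ≤ m, join R V W a ≤ V b + W c := fun a ha =>
    join_le fun b' hb' => hmax b' (a - b') (by rwa [add_tsub_cancel_of_le hb'])
  have join_add : join R V W (b + c) = V b + W c := by
    refine le_antisymm (join_le_max _ hbc) ?_
    simpa using le_join V W (le_self_add : b ≤ b + c)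
  refine IsGreatest.csSup_eq ⟨⟨b + c, hbc, join_add⟩, ?_⟩
  rintro _ ⟨a, ha, rfl⟩
  exact join_le_max a ha

theorem valid_pair_iff {ι : Type*} [DecidableEq ι] {i j : ι} (hij : i ≠ j)
    {m : Fin R → ℕ} {A : ι → Fin R → ℕ} : Valid R {i, j} m A ↔ A i + A j ≤ m := by
  rw [Valid, Finset.sum_pair hij]

theorem SW_pair {ι : Type*} [DecidableEq ι] {i j : ι} (hij : i ≠ j)
    (V : ι → (Fin R → ℕ) → ℝ) (A : ι → Fin R → ℕ) :
    SW R V {i, j} A = V i (A i) + V j (A j) := by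
  rw [SW, Finset.sum_pair hij]

theorem OPT_pair_eq_of_isMax {ι : Type*} [DecidableEq ι] {V : ι → (Fin R → ℕ) → ℝ} {i j : ι}
    (hij : i ≠ j) {m b c : Fin R → ℕ} (hbc : b + c ≤ m)
    (hmax : ∀ b' c', b' + c' ≤ m → V i b' + V j c' ≤ V i b + V j c) :
    OPT R V {i, j} m = V i b + V j c := by
  set A : ι → Fin R → ℕ := fun k => if k = i then b else c
  have hAi : A i = b := if_pos rfl
  have hAj : A j = c := if_neg hij.symm
  refine IsGreatest.csSup_eq ⟨⟨A, ?_, ?_⟩, ?_⟩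
  · rwa [valid_pair_iff hij, hAi, hAj]
  · rw [SW_pair hij, hAi, hAj]
  · rintro _ ⟨A', hA', rfl⟩
    rw [SW_pair hij]
    exact hmax _ _ ((valid_pair_iff hij).1 hA')

end

/-- Correctness of joining two valuation functions: maximizing the joint
valuation `V_i ⊕ V_j` over all allocation vectors bounded by `m` yields
`OPT({i, j}, m)`. -/
theorem join_two_correct (R : ℕ) {ι : Type*} [DecidableEq ι]
    (V : ι → (Fin R → ℕ) → ℝ) (i j : ι) (hij : i ≠ j) (m : Fin R → ℕ) :
    sSup {w : ℝ | ∃ a ≤ m, join R (V i) (V j) a = w} =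
      OPT R V ({i, j} : Finset ι) m := by
  obtain ⟨b, c, hbc, hmax⟩ := exists_add_le_isMax (fun b c => V i b + V j c) m
  rw [sSup_join_eq_of_isMax hbc hmax, OPT_pair_eq_of_isMax hij hbc hmax]
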